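/- Suppose z1 > 0, V > 0 and V² − 4V·P·z1 ≥ 0. Then for every (x4, x5) ∈ ℝ² satisfying (P + z1·x4)² + (Q + z2·x4 − x5)² = V·x4, we have x4 ≥ (V − 2P·z1 − √(V² − 4V·P·z1))/(2z1²). Moreover equality holds at x4 = x4*, x5 = Q + z2·x4*. -/
import Mathlib


/-- Every feasible point of the Volt-Var ellipse has x4 at least the closed-form
minimum x4*, and equality is achieved at (x4*, Q + z2 x4*). -/
theorem vvc_global_min_loss (P Q V z1 z2 : ℝ) (hz1 : z1 > 0) (hV : V > 0)
    (hdisc : V^2 - 4 * V * P * z1 ≥ 0) :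
    (∀ x4 x5 : ℝ, (P + z1 * x4)^2 + (Q + z2 * x4 - x5)^2 = V * x4 →
      (V - 2 * P * z1 - Real.sqrt (V^2 - 4 * V * P * z1)) / (2 * z1^2) ≤ x4) ∧
    ((P + z1 * ((V - 2 * P * z1 - Real.sqrt (V^2 - 4 * V * P * z1)) / (2 * z1^2)))^2
      + (Q + z2 * ((V - 2 * P * z1 - Real.sqrt (V^2 - 4 * V * P * z1)) / (2 * z1^2))
          - (Q + z2 * ((V - 2 * P * z1 - Real.sqrt (V^2 - 4 * V * P * z1)) / (2 * z1^2))))^2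
      = V * ((V - 2 * P * z1 - Real.sqrt (V^2 - 4 * V * P * z1)) / (2 * z1^2))) := by
  set s := Real.sqrt (V^2 - 4 * V * P * z1) with hs
  have hs0 : 0 ≤ s := Real.sqrt_nonneg _
  have hs2 : s^2 = V^2 - 4 * V * P * z1 := Real.sq_sqrt hdisc
  have hz2 : (0:ℝ) < 2 * z1^2 := by positivity
  constructor
  · intro x4 x5 h
    have key : (2*z1^2*x4 - (V - 2*P*z1))^2 ≤ s^2 := by
      nlinarith [sq_nonneg (Q + z2*x4 - x5)]
    have h2 : -s ≤ 2*z1^2*x4 - (V - 2*P*z1) := by nlinarith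
    rw [div_le_iff₀ hz2]
    linarith
  · field_simp
    nlinarith [hs2, sq_nonneg z1]
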